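/- (Minimality of the generating sets.) (a) For n ≥ 2, none of the 4n−3 elements f_1,…,f_n, f_1*,…,f_n*, u_{2−n},…,u_{n−2} of F_q[x_1,…,x_n,y_1,…,y_n] lies in the F_q-subalgebra generated by the remaining 4n−4 of these elements. (b) If q > 2, then for n ≥ 1 none of the 4n−1 elements f̃_1,…,f̃_n, f̃_1*,…,f̃_n*, u_{1−n},…,u_{n−1} lies in the F_q-subalgebra generated by the remaining 4n−2 of these elements. -/

import Mathlib

open MvPolynomial Matrix

variable (F : Type) [Field F] [Fintype F] (n : ℕ)

/-- `fX F n k` is the orbit product `f_k` (1-indexed, meaningful for `1 ≤ k ≤ n`). -/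
noncomputable def fX (k : ℕ) : MvPolynomial (Fin n ⊕ Fin n) F :=
  if h : 1 ≤ k ∧ k ≤ n then
    ∏ α : Fin (k - 1) → F,
      (X (Sum.inl ⟨k - 1, by omega⟩) +
        ∑ j : Fin (k - 1), C (α j) * X (Sum.inl ⟨j.val, by omega⟩))
  else 0

/-- `fY F n k` is `f_k^*` (1-indexed), the orbit product of `y_{n+1-k}`. -/
noncomputable def fY (k : ℕ) : MvPolynomial (Fin n ⊕ Fin n) F :=
  if h : 1 ≤ k ∧ k ≤ n then
    ∏ α : Fin (k - 1) → F,
      (X (Sum.inr ⟨n - k, by omega⟩) +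
        ∑ j : Fin (k - 1), C (α j) * X (Sum.inr ⟨n - 1 - j.val, by omega⟩))
  else 0

/-- `uInv F n j` is the invariant `u_j`, for `j : ℤ`. -/
noncomputable def uInv (j : ℤ) : MvPolynomial (Fin n ⊕ Fin n) F :=
  if 0 ≤ j then ∑ k : Fin n, X (Sum.inl k) ^ (Fintype.card F) ^ j.toNat * X (Sum.inr k)
  else ∑ k : Fin n, X (Sum.inl k) * X (Sum.inr k) ^ (Fintype.card F) ^ (-j).toNat

/-- `cX F n s t` is the Dickson-type invariant `c_{s,t}` (in the `x`-variables):
the sum over strictly increasing sequences `1 ≤ j_1 < ⋯ < j_{s-t} ≤ s` (encoded as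
strictly monotone functions `Fin (s-t) → Fin s`) of `∏_l f_{j_l}^{(q-1)·q^{t+l-j_l}}`. -/
noncomputable def cX (s t : ℕ) : MvPolynomial (Fin n ⊕ Fin n) F :=
  if s ≤ n then
    ∑ g ∈ Finset.univ.filter (fun g : Fin (s - t) → Fin s => ∀ a b : Fin (s - t), a < b → g a < g b),
      ∏ l : Fin (s - t),
        fX F n ((g l).val + 1) ^ ((Fintype.card F - 1) * (Fintype.card F) ^ (t + l.val - (g l).val))
  else 0

/-- `cY F n s t` is `c_{s,t}^*` (in the `y`-variables). -/
noncomputable def cY (s t : ℕ) : MvPolynomial (Fin n ⊕ Fin n) F :=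
  if s ≤ n then
    ∑ g ∈ Finset.univ.filter (fun g : Fin (s - t) → Fin s => ∀ a b : Fin (s - t), a < b → g a < g b),
      ∏ l : Fin (s - t),
        fY F n ((g l).val + 1) ^ ((Fintype.card F - 1) * (Fintype.card F) ^ (t + l.val - (g l).val))
  else 0

/-!
The substitution `x_k ↦ y_{n+1-k}`, `y_k ↦ x_{n+1-k}` is an involution of `F_q[V ⊕ V*]`
exchanging `f_i ↔ f_i*` and `u_j ↔ u_{-j}`, so it permutes each generating set, and only `f_i`
and `u_j` with `j ≥ 0` need to be treated. Write `d` for the exponent (`1` or `q - 1`) carried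
by the `f`'s.

Every generator other than `f_i^d` vanishes both at the point `x_i = 1` (all other coordinates
`0`) and at the origin, while `f_i^d` takes the values `1` and `0` there.

For `u_j`, let `c = q^j` and pick `K` with `c < q^K d`. Send `x_K ↦ t`, `y_K ↦ ε` into the dual
numbers over `F_q[t]/(t^(c+1))` and all other variables to `0`. Then `u_j ↦ t^c ε`, whereas
`u_m ↦ t^(q^m) ε` for `0 ≤ m ≠ j`, `u_m ↦ 0` for `m < 0`, `f_i^d ↦ 0` because
`t^(q^K d) = 0`, and `(f_i*)^d` goes to a power of `ε`. All of these lie in the subalgebra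
`F_q + ε · ker (coefficient of t^c)`, which does not contain `t^c ε`.
-/

open DualNumber TrivSqZeroExt

theorem Algebra.notMem_adjoin_diff_of_involutive {R A : Type*} [CommSemiring R] [Semiring A]
    [Algebra R A] {σ : A →ₐ[R] A} (hσ : Function.Involutive σ) {T : Set A}
    (hT : Set.MapsTo σ T T) {s : A} (hs : s ∉ Algebra.adjoin R (T \ {s})) :
    σ s ∉ Algebra.adjoin R (T \ {σ s}) := by
  intro hmem
  have hle : T \ {σ s} ⊆ (Algebra.adjoin R (T \ {s})).comap σ := by
    rintro t ⟨ht, hts⟩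
    refine Algebra.subset_adjoin ⟨hT ht, fun h ↦ hts ?_⟩
    simp only [Set.mem_singleton_iff] at h ⊢
    subst h
    exact (hσ t).symm
  have := Algebra.adjoin_le hle hmem
  rw [Subalgebra.mem_comap, hσ s] at this
  exact hs this

namespace DualNumber

variable {R A : Type*} [CommSemiring R] [CommSemiring A] [Algebra R A]

def scalarsAddEpsKer (f : A →ₗ[R] R) : Subalgebra R A[ε] where
  carrier := {b | b.fst ∈ Set.range (algebraMap R A) ∧ f b.snd = 0}
  add_mem' := by
    rintro x y ⟨⟨r, hr⟩, hx⟩ ⟨⟨r', hr'⟩, hy⟩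
    exact ⟨⟨r + r', by simp [hr, hr']⟩, by simp [hx, hy]⟩
  mul_mem' := by
    rintro x y ⟨⟨r, hr⟩, hx⟩ ⟨⟨r', hr'⟩, hy⟩
    refine ⟨⟨r * r', by simp [hr, hr']⟩, ?_⟩
    rw [snd_mul, ← hr, ← hr', ← Algebra.commutes, ← Algebra.smul_def, ← Algebra.smul_def,
      map_add, map_smul, map_smul, hx, hy, smul_zero, smul_zero, add_zero]
  algebraMap_mem' r := ⟨⟨r, rfl⟩, by rw [algebraMap_eq_inl', snd_inl, map_zero]⟩

theorem inr_mem_scalarsAddEpsKer {f : A →ₗ[R] R} {m : A} (hm : f m = 0) :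
    inr m ∈ scalarsAddEpsKer f :=
  ⟨⟨0, by simp⟩, hm⟩

theorem eps_pow_mem_scalarsAddEpsKer {f : A →ₗ[R] R} (hf : f 1 = 0) :
    ∀ e : ℕ, (ε : A[ε]) ^ e ∈ scalarsAddEpsKer f
  | 0 => by simp only [pow_zero]; exact (scalarsAddEpsKer f).one_mem
  | 1 => by simp only [pow_one]; exact inr_mem_scalarsAddEpsKer hf
  | e + 2 => by rw [pow_add, eps_pow_two, mul_zero]; exact zero_mem _

end DualNumber

section TruncatedPolynomial

open Polynomial

namespace AdjoinRoot

variable {R : Type*} [CommRing R]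

theorem root_X_pow_pow_eq_zero {c e : ℕ} (he : c < e) :
    root (Polynomial.X ^ (c + 1) : R[X]) ^ e = 0 := by
  rw [← mk_X (f := Polynomial.X ^ (c + 1)), ← map_pow, mk_eq_zero]
  exact pow_dvd_pow Polynomial.X he

variable (R) [Nontrivial R]

noncomputable def truncCoeff (c : ℕ) : AdjoinRoot (Polynomial.X ^ (c + 1) : R[X]) →ₗ[R] R :=
  (powerBasis' (monic_X_pow (c + 1))).basis.coord ⟨c, by simp [powerBasis']⟩

variable {R}

theorem truncCoeff_root_pow {c : ℕ} (e : ℕ) :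
    truncCoeff R c (root (Polynomial.X ^ (c + 1) : R[X]) ^ e) = if e = c then 1 else 0 := by
  rcases lt_or_ge c e with he | he
  · rw [root_X_pow_pow_eq_zero he, map_zero, if_neg he.ne']
  · have hb : root (Polynomial.X ^ (c + 1) : R[X]) ^ e =
        (powerBasis' (monic_X_pow (c + 1))).basis ⟨e, by simp [powerBasis']; omega⟩ := by
      rw [PowerBasis.basis_eq_pow]
      simp [powerBasis']
    rw [truncCoeff, hb, Module.Basis.coord_apply, Module.Basis.repr_self, Finsupp.single_apply]
    simp [Fin.ext_iff, eq_comm]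

theorem truncCoeff_one {c : ℕ} (hc : c ≠ 0) : truncCoeff R c 1 = 0 := by
  simpa [Ne.symm hc] using truncCoeff_root_pow (R := R) (c := c) 0

end AdjoinRoot

end TruncatedPolynomial

local notation "q" => Fintype.card F

variable {F n}

def swapRev (n : ℕ) : Fin n ⊕ Fin n → Fin n ⊕ Fin n :=
  Sum.elim (Sum.inr ∘ Fin.rev) (Sum.inl ∘ Fin.rev)

theorem swapRev_involutive : Function.Involutive (swapRev n) := by
  rintro (a | a) <;> simp [swapRev]

theorem rename_swapRev_involutive {R : Type*} [CommSemiring R] :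
    Function.Involutive (rename (R := R) (swapRev n)) := fun p ↦ by
  rw [rename_rename, swapRev_involutive.comp_self, rename_id_apply]

theorem rename_swapRev_fX (k : ℕ) : rename (swapRev n) (fX F n k) = fY F n k := by
  unfold fX fY
  split_ifs with hk
  · simp only [map_prod, map_add, map_sum, map_mul, rename_X, rename_C]
    refine Finset.prod_congr rfl fun α _ ↦ ?_
    congr 2
    · simp only [swapRev, Sum.elim_inl, Function.comp_apply, Sum.inr.injEq, Fin.ext_iff,
        Fin.val_rev]
      omega
    · ext j : 1
      simp only [swapRev, Sum.elim_inl, Function.comp_apply]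
      congr 3
      ext
      simp only [Fin.val_rev]
      omega
  · exact map_zero _

theorem rename_swapRev_fY (k : ℕ) : rename (swapRev n) (fY F n k) = fX F n k := by
  rw [← rename_swapRev_fX, rename_swapRev_involutive]

theorem rename_swapRev_uInv (j : ℤ) : rename (swapRev n) (uInv F n j) = uInv F n (-j) := by
  unfold uInv
  split_ifs with h₁ h₂ h₂ <;> simp only [map_sum, map_mul, map_pow, rename_X] <;>
    refine Fintype.sum_equiv Fin.revPerm _ _ fun k ↦ ?_
  · obtain rfl : j = 0 := by omega
    simp [swapRev, mul_comm]
  · simp [swapRev, mul_comm]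
  · simp [swapRev, mul_comm]
  · omega

variable (F n) in
def generators (d : ℕ) (h : ℤ) : Set (MvPolynomial (Fin n ⊕ Fin n) F) :=
  (Set.range fun i : Fin n => fX F n (i.val + 1) ^ d) ∪
    (Set.range fun i : Fin n => fY F n (i.val + 1) ^ d) ∪ uInv F n '' Set.Icc (-h) h

theorem mapsTo_rename_swapRev_generators (d : ℕ) (h : ℤ) :
    Set.MapsTo (rename (swapRev n)) (generators F n d h) (generators F n d h) := by
  rintro _ ((⟨i, rfl⟩ | ⟨i, rfl⟩) | ⟨j, ⟨hlo, hhi⟩, rfl⟩)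
  · exact Or.inl (Or.inr ⟨i, by simp only [map_pow, rename_swapRev_fX]⟩)
  · exact Or.inl (Or.inl ⟨i, by simp only [map_pow, rename_swapRev_fY]⟩)
  · exact Or.inr ⟨-j, ⟨by omega, by omega⟩, (rename_swapRev_uInv j).symm⟩

def pointAt {B : Type*} [Zero B] (K : Fin n) (v w : B) : Fin n ⊕ Fin n → B :=
  Sum.elim (Pi.single K v) (Pi.single K w)

section Evaluation

variable {B : Type*} [CommSemiring B] [Algebra F B] (K : Fin n) (v w : B)

theorem pointAt_comp_swapRev : pointAt K v w ∘ swapRev n = pointAt K.rev w v := by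
  ext (a | a) <;> simp [pointAt, swapRev, Pi.single_apply, Fin.rev_eq_iff]

theorem aeval_pointAt_fX (i : Fin n) :
    aeval (pointAt K v w) (fX F n (i + 1)) = if i = K then v ^ q ^ (i : ℕ) else 0 := by
  rw [fX, dif_pos ⟨by omega, by omega⟩, map_prod]
  split_ifs with hi
  · subst hi
    have hlow (j : ℕ) (hj : j < i) :
        (Pi.single i v : Fin n → B) ⟨j, hj.trans i.isLt⟩ = 0 := by
      simp [Fin.ext_iff, hj.ne]
    simp [hlow, pointAt]
  · refine Finset.prod_eq_zero (Finset.mem_univ 0) ?_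
    simp [pointAt, hi]

theorem aeval_pointAt_fY (i : Fin n) :
    aeval (pointAt K v w) (fY F n (i + 1)) = if i = K.rev then w ^ q ^ (i : ℕ) else 0 := by
  rw [← rename_swapRev_fX, aeval_rename, pointAt_comp_swapRev, aeval_pointAt_fX]

theorem aeval_pointAt_uInv (j : ℤ) :
    aeval (pointAt K v w) (uInv F n j) =
      if 0 ≤ j then v ^ q ^ j.toNat * w else v * w ^ q ^ (-j).toNat := by
  unfold uInv
  split_ifs <;> simp [pointAt, Pi.single_apply]

end Evaluation

theorem aeval_pointAt_eq_zero_of_mem_generators_diff {B : Type*} [CommSemiring B] [Algebra F B]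
    {d : ℕ} (hd : d ≠ 0) {h : ℤ} (i : Fin n) (v : B) {t : MvPolynomial (Fin n ⊕ Fin n) F}
    (ht : t ∈ generators F n d h \ {fX F n (i + 1) ^ d}) : aeval (pointAt i v 0) t = 0 := by
  obtain ⟨(⟨i', rfl⟩ | ⟨i', rfl⟩) | ⟨j, -, rfl⟩, hti⟩ := ht
  · have hi' : i' ≠ i := by rintro rfl; exact hti rfl
    simp [aeval_pointAt_fX, hi', hd]
  · simp [aeval_pointAt_fY, hd]
  · simp [aeval_pointAt_uInv]

theorem fX_pow_notMem_adjoin {d : ℕ} (hd : d ≠ 0) (h : ℤ) (i : Fin n) :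
    fX F n (i + 1) ^ d ∉ Algebra.adjoin F (generators F n d h \ {fX F n (i + 1) ^ d}) := by
  intro hmem
  have := AlgHom.adjoin_le_equalizer (aeval (pointAt i (1 : F) 0)) (aeval (pointAt i 0 0))
    (fun t ht ↦ by rw [aeval_pointAt_eq_zero_of_mem_generators_diff hd i _ ht,
      aeval_pointAt_eq_zero_of_mem_generators_diff hd i _ ht]) hmem
  rw [AlgHom.mem_equalizer, map_pow, map_pow, aeval_pointAt_fX, aeval_pointAt_fX, if_pos rfl,
    if_pos rfl] at this
  simp [hd] at this

theorem aeval_pointAt_inl_eps_uInv_natCast {A : Type*} [CommRing A] [Algebra F A] (K : Fin n)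
    (a : A) (m : ℕ) : aeval (pointAt K (inl a : A[ε]) ε) (uInv F n m) = inr (a ^ q ^ m) := by
  rw [aeval_pointAt_uInv, if_pos m.cast_nonneg, Int.toNat_natCast, inl_pow, eps, inl_mul_inr,
    smul_eq_mul, mul_one]

theorem aeval_pointAt_root_eps_mem_scalarsAddEpsKer {d : ℕ} {h : ℤ} {j : ℕ} {K : Fin n}
    (hK : q ^ j < q ^ (K : ℕ) * d) {t : MvPolynomial (Fin n ⊕ Fin n) F}
    (ht : t ∈ generators F n d h \ {uInv F n j}) :
    aeval (pointAt K (inl (AdjoinRoot.root (Polynomial.X ^ (q ^ j + 1) : Polynomial F))) ε) t ∈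
      scalarsAddEpsKer (AdjoinRoot.truncCoeff F (q ^ j)) := by
  have hq : 1 < q := Fintype.one_lt_card
  have hd : d ≠ 0 := by rintro rfl; simp at hK
  obtain ⟨(⟨i, rfl⟩ | ⟨i, rfl⟩) | ⟨m, -, rfl⟩, hne⟩ := ht
  · rw [map_pow, aeval_pointAt_fX]
    split_ifs with hiK
    · subst hiK
      rw [← pow_mul, inl_pow, AdjoinRoot.root_X_pow_pow_eq_zero hK, inl_zero]
      exact zero_mem _
    · rw [zero_pow hd]
      exact zero_mem _
  · rw [map_pow, aeval_pointAt_fY]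
    split_ifs
    · rw [← pow_mul]
      exact eps_pow_mem_scalarsAddEpsKer (AdjoinRoot.truncCoeff_one (by positivity)) _
    · rw [zero_pow hd]
      exact zero_mem _
  · rcases le_or_gt 0 m with hm | hm
    · lift m to ℕ using hm
      have hmj : m ≠ j := by rintro rfl; exact hne rfl
      rw [aeval_pointAt_inl_eps_uInv_natCast]
      refine inr_mem_scalarsAddEpsKer ?_
      rw [AdjoinRoot.truncCoeff_root_pow, if_neg ((Nat.pow_right_injective hq).ne hmj)]
    · have hm2 : 2 ≤ q ^ (-m).toNat := hq.trans_le (Nat.le_self_pow (by omega) q)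
      rw [aeval_pointAt_uInv, if_neg hm.not_ge, pow_eq_zero_of_le hm2 eps_pow_two, mul_zero]
      exact zero_mem _

theorem uInv_notMem_adjoin {d : ℕ} (h : ℤ) (j : ℕ) (K : Fin n)
    (hK : q ^ j < q ^ (K : ℕ) * d) :
    uInv F n j ∉ Algebra.adjoin F (generators F n d h \ {uInv F n j}) := by
  intro hmem
  let φ := aeval (R := F)
    (pointAt K (inl (AdjoinRoot.root (Polynomial.X ^ (q ^ j + 1) : Polynomial F))) ε)
  have hφ : φ (uInv F n j) ∈ scalarsAddEpsKer (AdjoinRoot.truncCoeff F (q ^ j)) :=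
    Algebra.adjoin_le (S := (scalarsAddEpsKer _).comap φ)
      (fun _ ht ↦ aeval_pointAt_root_eps_mem_scalarsAddEpsKer hK ht) hmem
  have := hφ.2
  rw [aeval_pointAt_inl_eps_uInv_natCast, snd_inr, AdjoinRoot.truncCoeff_root_pow, if_pos rfl]
    at this
  exact one_ne_zero this

theorem notMem_adjoin_generators_diff {d : ℕ} {h : ℤ} (K : Fin n)
    (hK : q ^ h.toNat < q ^ (K : ℕ) * d) :
    ∀ s ∈ generators F n d h, s ∉ Algebra.adjoin F (generators F n d h \ {s}) := by
  have hd : d ≠ 0 := by rintro rfl; simp at hK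
  have hswap {t : MvPolynomial (Fin n ⊕ Fin n) F}
      (ht : t ∉ Algebra.adjoin F (generators F n d h \ {t})) :
      rename (swapRev n) t ∉ Algebra.adjoin F (generators F n d h \ {rename (swapRev n) t}) :=
    Algebra.notMem_adjoin_diff_of_involutive rename_swapRev_involutive
      (mapsTo_rename_swapRev_generators d h) ht
  have huInv (j : ℕ) (hj : (j : ℤ) ≤ h) :
      uInv F n j ∉ Algebra.adjoin F (generators F n d h \ {uInv F n j}) :=
    uInv_notMem_adjoin h j K <|
      (Nat.pow_le_pow_right Fintype.card_pos (by omega)).trans_lt hK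
  rintro _ ((⟨i, rfl⟩ | ⟨i, rfl⟩) | ⟨j, ⟨hlo, hhi⟩, rfl⟩)
  · exact fX_pow_notMem_adjoin hd h i
  · simpa only [map_pow, rename_swapRev_fX] using hswap (fX_pow_notMem_adjoin hd h i)
  · rcases le_or_gt 0 j with hj | hj
    · lift j to ℕ using hj
      exact huInv j hhi
    · simpa only [rename_swapRev_uInv, Int.toNat_of_nonneg (neg_nonneg.2 hj.le), neg_neg] using
        hswap (huInv (-j).toNat (by omega))

/-- Minimality of the generating sets: (a) for `n ≥ 2`, none of the generators
`f_1,…,f_n, f_1^*,…,f_n^*, u_{2-n},…,u_{n-2}` lies in the subalgebra generated by the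
remaining ones; (b) if `q > 2`, for `n ≥ 1` the same holds for the generators
`f̃_1,…,f̃_n, f̃_1^*,…,f̃_n^*, u_{1-n},…,u_{n-1}`. -/
theorem generators_minimal :
    (2 ≤ n →
      ∀ s ∈ ((Set.range fun i : Fin n => fX F n (i.val + 1)) ∪
          (Set.range fun i : Fin n => fY F n (i.val + 1)) ∪
          (uInv F n '' Set.Icc (2 - (n : ℤ)) ((n : ℤ) - 2))),
        s ∉ Algebra.adjoin F
          (((Set.range fun i : Fin n => fX F n (i.val + 1)) ∪
            (Set.range fun i : Fin n => fY F n (i.val + 1)) ∪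
            (uInv F n '' Set.Icc (2 - (n : ℤ)) ((n : ℤ) - 2))) \ {s})) ∧
    (2 < Fintype.card F → 1 ≤ n →
      ∀ s ∈ ((Set.range fun i : Fin n => fX F n (i.val + 1) ^ (Fintype.card F - 1)) ∪
          (Set.range fun i : Fin n => fY F n (i.val + 1) ^ (Fintype.card F - 1)) ∪
          (uInv F n '' Set.Icc (1 - (n : ℤ)) ((n : ℤ) - 1))),
        s ∉ Algebra.adjoin F
          (((Set.range fun i : Fin n => fX F n (i.val + 1) ^ (Fintype.card F - 1)) ∪
            (Set.range fun i : Fin n => fY F n (i.val + 1) ^ (Fintype.card F - 1)) ∪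
            (uInv F n '' Set.Icc (1 - (n : ℤ)) ((n : ℤ) - 1))) \ {s})) := by
  refine ⟨fun hn ↦ ?_, fun hq hn ↦ ?_⟩
  · have hK : q ^ ((n : ℤ) - 2).toNat < q ^ (n - 1) * 1 := by
      rw [mul_one]
      exact Nat.pow_lt_pow_right Fintype.one_lt_card (by omega)
    simpa only [generators, pow_one, neg_sub] using
      notMem_adjoin_generators_diff ⟨n - 1, by omega⟩ hK
  · have hK : q ^ ((n : ℤ) - 1).toNat < q ^ (n - 1) * (q - 1) := by
      rw [show ((n : ℤ) - 1).toNat = n - 1 by omega]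
      exact lt_mul_of_one_lt_right (by positivity) (by omega)
    simpa only [generators, neg_sub] using notMem_adjoin_generators_diff ⟨n - 1, by omega⟩ hK
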